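/- (Lemma 2) Let (G, v0, c, d, W) be a CARP instance on the complete graph on a finite vertex set V. Every feasible solution for (G, v0, c^▼, d, W) of c^▼-cost w can be transformed into a feasible solution (𝒞, s) for (G, v0, c^▼, d, W) of c^▼-cost at most w such that every edge in R is traversed by exactly one cycle C of 𝒞, is traversed by that cycle C exactly once, and is served by C. -/

import Mathlib

noncomputable section

/-- Cost of a walk: sum of edge costs over its edge traversals,
counted with multiplicity. -/
def walkCost {V : Type*} {G : SimpleGraph V} (γ : Sym2 V → ℝ)
    {u v : V} (p : G.Walk u v) : ℝ :=
  (p.edges.map γ).sum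

/-- Minimum `c`-cost of a walk from `u` to `v` in `G`
(`graphDist G c u u = 0` via the trivial walk). -/
def graphDist {V : Type*} (G : SimpleGraph V) (c : Sym2 V → ℝ) (u v : V) : ℝ :=
  sInf {x : ℝ | ∃ p : G.Walk u v, walkCost c p = x}

/-- A feasible CARP solution on the complete graph on `V` with depot `v0`,
demand function `d` and capacity `W`: a finite family of closed walks, each
through the depot, together with a serving function assigning to each walk a
set of (positive-demand) edges it traverses, of total demand at most `W`,
such that every positive-demand edge is served by exactly one walk.
(Feasibility does not depend on the edge costs.) -/
structure CARPSol (V : Type*) (v0 : V) (d : Sym2 V → ℝ) (W : ℝ) where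
  n : ℕ
  walk : Fin n → (⊤ : SimpleGraph V).Walk v0 v0
  serve : Fin n → Finset (Sym2 V)
  serve_subset : ∀ i, ∀ e ∈ serve i, e ∈ (walk i).edges
  serve_pos : ∀ i, ∀ e ∈ serve i, 0 < d e
  serve_cap : ∀ i, ∑ e ∈ serve i, d e ≤ W
  serve_unique : ∀ e : Sym2 V, 0 < d e → ∃! i, e ∈ serve i

/-- Cost of a CARP solution with respect to an edge-cost function `γ`:
the sum over its walks of their traversal costs. -/
def solCost {V : Type*} {v0 : V} {d : Sym2 V → ℝ} {W : ℝ}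
    (γ : Sym2 V → ℝ) (sol : CARPSol V v0 d W) : ℝ :=
  ∑ i, walkCost γ (sol.walk i)

end

/-!
Fix for every ordered pair of adjacent vertices `x, y` a `c`-shortest walk from `x` to `y`, its
*detour*. A shortest walk uses only edges whose cost equals the distance between their
endpoints, so no detour traverses an edge of `R`; and its `c▼`-cost is at most its `c`-cost,
which is `c▼(x, y)`. Now reroute every walk of the solution: each traversal of an edge of `R`
is replaced by the detour of that edge, except the first traversal of an edge that the walk
itself serves. This keeps the solution feasible, does not increase its `c▼`-cost, and leaves
every edge of `R` traversed exactly once, by the walk serving it.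
-/

open SimpleGraph

section WalkCost

variable {V : Type*} {G : SimpleGraph V} {γ c : Sym2 V → ℝ} {u v w : V}

@[simp]
theorem walkCost_nil : walkCost γ (Walk.nil : G.Walk u u) = 0 := by
  simp [walkCost]

@[simp]
theorem walkCost_cons (h : G.Adj u v) (p : G.Walk v w) :
    walkCost γ (Walk.cons h p) = γ s(u, v) + walkCost γ p := by
  simp [walkCost]

@[simp]
theorem walkCost_append (p : G.Walk u v) (q : G.Walk v w) :
    walkCost γ (p.append q) = walkCost γ p + walkCost γ q := by
  simp [walkCost]

@[simp]
theorem walkCost_reverse (p : G.Walk u v) : walkCost γ p.reverse = walkCost γ p := by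
  simp [walkCost, List.sum_reverse]

theorem walkCost_nonneg (hγ : ∀ e, 0 ≤ γ e) (p : G.Walk u v) : 0 ≤ walkCost γ p :=
  List.sum_nonneg (by simpa using fun e _ => hγ e)

theorem walkCost_mono {p : G.Walk u v} (h : ∀ e ∈ p.edges, γ e ≤ c e) :
    walkCost γ p ≤ walkCost c p :=
  List.sum_le_sum h

theorem walkCost_bypass_le [DecidableEq V] (hγ : ∀ e, 0 ≤ γ e) (p : G.Walk u v) :
    walkCost γ p.bypass ≤ walkCost γ p := by
  obtain ⟨l, hperm, hsub⟩ :=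
    p.bypass_isPath.isTrail.edges_nodup.subperm p.edges_bypass_subset_edges
  rw [walkCost, ← (hperm.map γ).sum_eq]
  exact (hsub.map γ).sum_le_sum (by simpa using fun e _ => hγ e)

end WalkCost

theorem SimpleGraph.Walk.exists_eq_append_cons_of_mem_edges {V : Type*} {G : SimpleGraph V}
    {u v : V} {e : Sym2 V} {p : G.Walk u v} (he : e ∈ p.edges) :
    ∃ (a b : V) (h : G.Adj a b) (p₁ : G.Walk u a) (p₂ : G.Walk b v),
      p = p₁.append (Walk.cons h p₂) ∧ s(a, b) = e := by
  induction p with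
  | nil => simp at he
  | @cons x y z h p ih =>
    rcases List.mem_cons.mp (Walk.edges_cons h p ▸ he) with rfl | he
    · exact ⟨x, y, h, Walk.nil, p, by simp, rfl⟩
    · obtain ⟨a, b, hab, p₁, p₂, rfl, rfl⟩ := ih he
      exact ⟨a, b, hab, Walk.cons h p₁, p₂, by simp, rfl⟩

section GraphDist

variable {V : Type*} {G : SimpleGraph V} {c : Sym2 V → ℝ} {u v : V}

theorem graphDist_comm (u v : V) : graphDist G c u v = graphDist G c v u := by
  have reverse_mem : ∀ u v : V, {x | ∃ p : G.Walk u v, walkCost c p = x} ⊆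
      {x | ∃ p : G.Walk v u, walkCost c p = x} :=
    fun _ _ _ ⟨p, hp⟩ => ⟨p.reverse, by rw [walkCost_reverse, hp]⟩
  rw [graphDist, graphDist, (reverse_mem u v).antisymm (reverse_mem v u)]

theorem graphDist_le_walkCost (hc : ∀ e, 0 ≤ c e) (p : G.Walk u v) :
    graphDist G c u v ≤ walkCost c p :=
  csInf_le ⟨0, by rintro _ ⟨q, rfl⟩; exact walkCost_nonneg hc q⟩ ⟨p, rfl⟩

theorem graphDist_le_of_adj (hc : ∀ e, 0 ≤ c e) (h : G.Adj u v) :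
    graphDist G c u v ≤ c s(u, v) := by
  simpa using graphDist_le_walkCost hc (Walk.cons h Walk.nil)

theorem exists_walkCost_lt_of_graphDist_lt (p : G.Walk u v) {x : ℝ}
    (h : graphDist G c u v < x) : ∃ q : G.Walk u v, walkCost c q < x := by
  obtain ⟨_, ⟨q, rfl⟩, hq⟩ := exists_lt_of_csInf_lt
    (⟨_, p, rfl⟩ : {x | ∃ q : G.Walk u v, walkCost c q = x}.Nonempty) h
  exact ⟨q, hq⟩

theorem exists_walkCost_eq_graphDist [Fintype V] [DecidableEq V] [DecidableRel G.Adj]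
    (hc : ∀ e, 0 ≤ c e) (h : G.Reachable u v) :
    ∃ p : G.Walk u v, walkCost c p = graphDist G c u v := by
  obtain ⟨q⟩ := h
  obtain ⟨P, -, hP⟩ := Finset.exists_min_image Finset.univ
    (fun P : G.Path u v => walkCost c P.val)
    (Finset.univ_nonempty_iff.mpr ⟨⟨q.bypass, q.bypass_isPath⟩⟩)
  refine ⟨P, le_antisymm (le_csInf ⟨_, q, rfl⟩ ?_) (graphDist_le_walkCost hc _)⟩
  rintro _ ⟨p, rfl⟩
  exact (hP ⟨p.bypass, p.bypass_isPath⟩ (Finset.mem_univ _)).trans (walkCost_bypass_le hc p)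

theorem graphDist_eq_of_mem_edges_of_walkCost_eq (hc : ∀ e, 0 ≤ c e) {p : G.Walk u v}
    (hp : walkCost c p = graphDist G c u v) {a b : V} (hab : s(a, b) ∈ p.edges) :
    graphDist G c a b = c s(a, b) := by
  refine le_antisymm (graphDist_le_of_adj hc (p.adj_of_mem_edges hab)) ?_
  obtain ⟨a', b', hadj, p₁, p₂, rfl, he⟩ := p.exists_eq_append_cons_of_mem_edges hab
  suffices c s(a', b') ≤ graphDist G c a' b' by
    rcases Sym2.eq_iff.mp he with ⟨rfl, rfl⟩ | ⟨rfl, rfl⟩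
    · exact this
    · rwa [Sym2.eq_swap, graphDist_comm]
  by_contra! hlt
  obtain ⟨q, hq⟩ := exists_walkCost_lt_of_graphDist_lt (Walk.cons hadj Walk.nil) hlt
  have := graphDist_le_walkCost hc (p₁.append (q.append p₂))
  simp only [walkCost_append, walkCost_cons] at hp this
  linarith

end GraphDist

namespace SimpleGraph.Walk

variable {V : Type*} [DecidableEq V] {G : SimpleGraph V} (R : Finset (Sym2 V))
  (detour : ∀ x y : V, G.Adj x y → G.Walk x y)

def reroute : ∀ {u v : V}, Finset (Sym2 V) → G.Walk u v → G.Walk u v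
  | _, _, _, nil => nil
  | u, _, K, @cons _ _ _ y _ h p =>
    if s(u, y) ∈ R \ K then (detour u y h).append (reroute K p)
    else cons h (reroute (K.erase s(u, y)) p)

variable {R detour} {u v : V}

theorem walkCost_reroute_le {γ : Sym2 V → ℝ}
    (hdetour : ∀ x y h, walkCost γ (detour x y h) ≤ γ s(x, y)) (K : Finset (Sym2 V))
    (p : G.Walk u v) : walkCost γ (p.reroute R detour K) ≤ walkCost γ p := by
  induction p generalizing K with
  | nil => simp [reroute]
  | @cons x y z h p ih =>
    rw [reroute]
    split_ifs
    · simpa using add_le_add (hdetour x y h) (ih K)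
    · simpa using ih _

theorem mem_edges_reroute {K : Finset (Sym2 V)} {p : G.Walk u v} {e : Sym2 V}
    (he : e ∈ p.edges) (heK : e ∈ R → e ∈ K) : e ∈ (p.reroute R detour K).edges := by
  induction p generalizing K with
  | nil => simp at he
  | @cons x y z h p ih =>
    rw [reroute]
    have he' := List.mem_cons.mp (edges_cons h p ▸ he)
    split_ifs with hxy
    · have hne : e ≠ s(x, y) := by
        rintro rfl
        exact (Finset.mem_sdiff.mp hxy).2 (heK (Finset.mem_sdiff.mp hxy).1)
      exact edges_append _ _ ▸ List.mem_append_right _ (ih (he'.resolve_left hne) heK)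
    · rw [edges_cons, List.mem_cons]
      by_cases hne : e = s(x, y)
      · exact .inl hne
      · exact .inr (ih (he'.resolve_left hne) fun heR => Finset.mem_erase.mpr ⟨hne, heK heR⟩)

theorem count_edges_reroute {e : Sym2 V} (heR : e ∈ R)
    (havoid : ∀ x y h, e ∉ (detour x y h).edges) (K : Finset (Sym2 V)) (p : G.Walk u v) :
    (p.reroute R detour K).edges.count e = if e ∈ K ∧ e ∈ p.edges then 1 else 0 := by
  induction p generalizing K with
  | nil => simp [reroute]
  | @cons x y z h p ih =>
    simp only [reroute, edges_cons, List.mem_cons]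
    by_cases hxy : s(x, y) ∈ R \ K
    · rw [if_pos hxy, edges_append, List.count_append,
        List.count_eq_zero.mpr (havoid x y h), ih, zero_add]
      grind
    · rw [if_neg hxy, edges_cons, List.count_cons, ih]
      grind

end SimpleGraph.Walk

namespace CARPSol

variable {V : Type*} [DecidableEq V] {v0 : V} {d : Sym2 V → ℝ} {W : ℝ}
  (sol : CARPSol V v0 d W) {R : Finset (Sym2 V)}
  {detour : ∀ x y : V, (⊤ : SimpleGraph V).Adj x y → (⊤ : SimpleGraph V).Walk x y}

def reroute (R : Finset (Sym2 V))
    (detour : ∀ x y : V, (⊤ : SimpleGraph V).Adj x y → (⊤ : SimpleGraph V).Walk x y) :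
    CARPSol V v0 d W where
  n := sol.n
  walk i := (sol.walk i).reroute R detour (sol.serve i)
  serve := sol.serve
  serve_subset i _ he := Walk.mem_edges_reroute (sol.serve_subset i _ he) fun _ => he
  serve_pos := sol.serve_pos
  serve_cap := sol.serve_cap
  serve_unique := sol.serve_unique

theorem solCost_reroute_le {γ : Sym2 V → ℝ}
    (hdetour : ∀ x y h, walkCost γ (detour x y h) ≤ γ s(x, y)) :
    solCost γ (sol.reroute R detour) ≤ solCost γ sol :=
  Finset.sum_le_sum fun _ _ => Walk.walkCost_reroute_le hdetour _ _

theorem reroute_traverses_once {e : Sym2 V} (heR : e ∈ R) (hde : 0 < d e)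
    (havoid : ∀ x y h, e ∉ (detour x y h).edges) :
    ∃ i : Fin (sol.reroute R detour).n,
      e ∈ (sol.reroute R detour).serve i ∧
      ((sol.reroute R detour).walk i).edges.count e = 1 ∧
      ∀ j : Fin (sol.reroute R detour).n,
        e ∈ ((sol.reroute R detour).walk j).edges → j = i := by
  obtain ⟨i, hi, hunique⟩ := sol.serve_unique e hde
  have hcount j := Walk.count_edges_reroute heR havoid (sol.serve j) (sol.walk j)
  refine ⟨i, hi, ?_, fun j hj => hunique j ?_⟩
  · simpa [reroute, hi, sol.serve_subset i e hi] using hcount i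
  · by_contra hj'
    exact List.count_eq_zero.mp ((hcount j).trans (if_neg fun h => hj' h.1)) hj

end CARPSol

theorem exists_solution_R_once_general {V : Type*} [Fintype V] [DecidableEq V]
    (v0 : V) (c d : Sym2 V → ℝ) (W : ℝ)
    (hc : ∀ e, 0 ≤ c e)
    (cDn cBk : Sym2 V → ℝ)
    (hDn : ∀ u v : V, cDn s(u, v) =
      if 0 < d s(u, v) then c s(u, v) else graphDist (⊤ : SimpleGraph V) c u v)
    (hBk : ∀ u v : V, cBk s(u, v) = graphDist (⊤ : SimpleGraph V) c u v)
    (sol : CARPSol V v0 d W) (w : ℝ) (hw : solCost cBk sol = w) :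
    ∃ sol' : CARPSol V v0 d W,
      solCost cBk sol' ≤ w ∧
      ∀ e ∈ Finset.univ.filter (fun e : Sym2 V => 0 < d e ∧ cDn e ≠ cBk e),
        ∃ i : Fin sol'.n,
          e ∈ sol'.serve i ∧
          (sol'.walk i).edges.count e = 1 ∧
          ∀ j : Fin sol'.n, e ∈ (sol'.walk j).edges → j = i := by
  set R := Finset.univ.filter (fun e : Sym2 V => 0 < d e ∧ cDn e ≠ cBk e)
  choose detour hdetour using fun x y (h : (⊤ : SimpleGraph V).Adj x y) =>
    exists_walkCost_eq_graphDist hc h.reachable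
  have tight x y h {a b} (hab : s(a, b) ∈ (detour x y h).edges) :
      graphDist ⊤ c a b = c s(a, b) :=
    graphDist_eq_of_mem_edges_of_walkCost_eq hc (hdetour x y h) hab
  have hcost x y h : walkCost cBk (detour x y h) ≤ cBk s(x, y) := by
    rw [hBk, ← hdetour x y h]
    refine walkCost_mono fun f hf => ?_
    induction f using Sym2.ind
    rw [hBk, tight x y h hf]
  have havoid x y h e (heR : e ∈ R) : e ∉ (detour x y h).edges := by
    induction e using Sym2.ind with | _ a b => ?_
    intro hab
    simp only [R, Finset.mem_filter, Finset.mem_univ, true_and] at heR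
    rw [hDn, hBk, if_pos heR.1, tight x y h hab] at heR
    exact heR.2 rfl
  exact ⟨sol.reroute R detour, hw ▸ sol.solCost_reroute_le hcost,
    fun e he => sol.reroute_traverses_once he (Finset.mem_filter.mp he).2.1
      fun x y h => havoid x y h e he⟩

/-- Lemma 2: every feasible solution for the instance with
costs `c▼`, of `c▼`-cost `w`, can be transformed into a feasible solution of
`c▼`-cost at most `w` in which every edge of
`R = {e : d(e) > 0 and c▽(e) ≠ c▼(e)}` is traversed by exactly one cycle,
is traversed by that cycle exactly once, and is served by that cycle. -/
theorem exists_solution_R_once {V : Type*} [Fintype V] [DecidableEq V]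
    (v0 : V) (c d : Sym2 V → ℝ) (W : ℝ)
    (hc : ∀ e, 0 ≤ c e) (hd : ∀ e, 0 ≤ d e) (hW : 0 ≤ W)
    (cDn cBk : Sym2 V → ℝ)
    (hDn : ∀ u v : V, cDn s(u, v) =
      if 0 < d s(u, v) then c s(u, v) else graphDist (⊤ : SimpleGraph V) c u v)
    (hBk : ∀ u v : V, cBk s(u, v) = graphDist (⊤ : SimpleGraph V) c u v)
    (sol : CARPSol V v0 d W) (w : ℝ) (hw : solCost cBk sol = w) :
    ∃ sol' : CARPSol V v0 d W,
      solCost cBk sol' ≤ w ∧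
      ∀ e ∈ Finset.univ.filter (fun e : Sym2 V => 0 < d e ∧ cDn e ≠ cBk e),
        ∃ i : Fin sol'.n,
          e ∈ sol'.serve i ∧
          (sol'.walk i).edges.count e = 1 ∧
          ∀ j : Fin sol'.n, e ∈ (sol'.walk j).edges → j = i :=
  exists_solution_R_once_general v0 c d W hc cDn cBk hDn hBk sol w hw
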